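/- Let s > 0 be a real number and let P be a real polynomial function, written as P(x) = Σ_j c_j (s - x)^j; let m̃ be the smallest index with c_{m̃} ≠ 0. Then (-κ)^{m̃+1} · e^{κs} · ∫_0^s e^{-κx} P(x) dx tends to m̃! · c_{m̃} as κ → -∞. -/

import Mathlib

/-!
Substituting `u = s - x` and `λ = -κ` turns the expression into `λ^(m̃+1) ∫₀ˢ e^{-λu} Q(u) du`
with `Q(u) = ∑ⱼ cⱼ uʲ`. Rescaling `t = λu` gives `λ^(j+1) ∫₀ˢ e^{-λu} uʲ du = ∫₀^{λs} e^{-t} tʲ dt`,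
which tends to `Γ(j+1) = j!`; so the term of index `j` contributes `λ^(m̃-j) · j! · cⱼ`, which
vanishes in the limit unless `j = m̃`.
-/

open MeasureTheory Filter Set Real Topology Nat

lemma integrableOn_exp_neg_mul_pow_Ioi (n : ℕ) :
    IntegrableOn (fun t : ℝ => exp (-t) * t ^ n) (Ioi 0) :=
  (GammaIntegral_convergent (s := (n : ℝ) + 1) (by positivity)).congr_fun
    (fun x _ => by norm_num [rpow_natCast]) measurableSet_Ioi

lemma integral_exp_neg_mul_pow_Ioi (n : ℕ) :
    ∫ t in Ioi (0 : ℝ), exp (-t) * t ^ n = n ! := by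
  rw [← Gamma_nat_eq_factorial, Gamma_eq_integral (by positivity)]
  norm_num [rpow_natCast]

lemma pow_mul_integral_exp_neg_mul_pow {l : ℝ} (hl : l ≠ 0) (s : ℝ) (n : ℕ) :
    l ^ (n + 1) * ∫ u in (0 : ℝ)..s, exp (-(l * u)) * u ^ n =
      ∫ t in (0 : ℝ)..l * s, exp (-t) * t ^ n := by
  have hscale := intervalIntegral.integral_comp_mul_left
    (fun t : ℝ => exp (-t) * t ^ n) (a := 0) (b := s) hl
  rw [mul_zero, smul_eq_mul] at hscale
  rw [← mul_inv_cancel_left₀ hl (∫ t in (0 : ℝ)..l * s, exp (-t) * t ^ n), ← hscale,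
    ← intervalIntegral.integral_const_mul, ← intervalIntegral.integral_const_mul]
  congr 1 with u
  ring

lemma tendsto_pow_mul_integral_exp_neg_mul_pow {s : ℝ} (hs : 0 < s) (n : ℕ) :
    Tendsto (fun l : ℝ => l ^ (n + 1) * ∫ u in (0 : ℝ)..s, exp (-(l * u)) * u ^ n)
      atTop (𝓝 (n ! : ℝ)) := by
  have hlim := intervalIntegral_tendsto_integral_Ioi 0 (integrableOn_exp_neg_mul_pow_Ioi n)
    (tendsto_id.atTop_mul_const hs)
  rw [integral_exp_neg_mul_pow_Ioi] at hlim
  refine hlim.congr' ?_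
  filter_upwards [eventually_ne_atTop 0] with l hl
  exact (pow_mul_integral_exp_neg_mul_pow hl s n).symm

lemma tendsto_pow_mul_integral_exp_neg_mul_pow_of_lt {s : ℝ} (hs : 0 < s) {m n : ℕ}
    (hmn : m < n) :
    Tendsto (fun l : ℝ => l ^ (m + 1) * ∫ u in (0 : ℝ)..s, exp (-(l * u)) * u ^ n)
      atTop (𝓝 0) := by
  have hdecay : Tendsto (fun l : ℝ => l⁻¹ ^ (n - m)) atTop (𝓝 0) := by
    simpa [zero_pow (Nat.sub_pos_of_lt hmn).ne'] using
      (tendsto_inv_atTop_zero (𝕜 := ℝ)).pow (n - m)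
  have hlim := hdecay.mul (tendsto_pow_mul_integral_exp_neg_mul_pow hs n)
  rw [zero_mul] at hlim
  refine hlim.congr' ?_
  filter_upwards [eventually_ne_atTop 0] with l hl
  rw [← mul_assoc, inv_pow, ← div_eq_inv_mul]
  congr 1
  rw [div_eq_iff (pow_ne_zero _ hl), ← pow_add]
  congr 1
  omega

lemma tendsto_pow_mul_integral_exp_neg_mul_sum_pow {s : ℝ} (hs : 0 < s) {m d : ℕ}
    (hmd : m ≤ d) (c : ℕ → ℝ) :
    Tendsto (fun l : ℝ => l ^ (m + 1) *
        ∫ u in (0 : ℝ)..s, exp (-(l * u)) * ∑ j ∈ Finset.Icc m d, c j * u ^ j)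
      atTop (𝓝 (m ! * c m)) := by
  have hterm : ∀ j ∈ Finset.Icc m d, Tendsto
      (fun l : ℝ => c j * (l ^ (m + 1) * ∫ u in (0 : ℝ)..s, exp (-(l * u)) * u ^ j))
      atTop (𝓝 (if j = m then m ! * c m else 0)) := by
    intro j hj
    rcases (Finset.mem_Icc.mp hj).1.eq_or_lt with rfl | hlt
    · simpa [mul_comm] using (tendsto_pow_mul_integral_exp_neg_mul_pow hs m).const_mul (c m)
    · simpa [hlt.ne'] using (tendsto_pow_mul_integral_exp_neg_mul_pow_of_lt hs hlt).const_mul (c j)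
  have hsum := tendsto_finsetSum _ hterm
  rw [Finset.sum_ite_eq', if_pos (Finset.mem_Icc.mpr ⟨le_rfl, hmd⟩)] at hsum
  refine hsum.congr fun l => ?_
  simp_rw [Finset.mul_sum]
  rw [intervalIntegral.integral_finsetSum fun j _ =>
    (Continuous.intervalIntegrable (by fun_prop) _ _), Finset.mul_sum]
  refine Finset.sum_congr rfl fun j _ => ?_
  rw [← intervalIntegral.integral_const_mul, ← intervalIntegral.integral_const_mul,
    ← intervalIntegral.integral_const_mul]
  congr 1 with u
  ring

lemma integral_exp_mul_comp_sub_left (κ s : ℝ) (f : ℝ → ℝ) :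
    ∫ x in (0 : ℝ)..s, exp (-κ * x) * f (s - x) =
      exp (-κ * s) * ∫ u in (0 : ℝ)..s, exp (κ * u) * f u := by
  have hreflect := intervalIntegral.integral_comp_sub_left
    (fun u => exp (-κ * s) * (exp (κ * u) * f u)) (a := 0) (b := s) s
  rw [sub_self, sub_zero] at hreflect
  rw [← intervalIntegral.integral_const_mul, ← hreflect]
  congr 1 with x
  rw [← mul_assoc, ← exp_add]
  ring_nf

theorem stmt_2_general (s : ℝ) (hs : 0 < s) (mt d : ℕ) (hmd : mt ≤ d) (c : ℕ → ℝ)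
    (P : ℝ → ℝ) (hP : ∀ x, P x = ∑ j ∈ Finset.Icc mt d, c j * (s - x) ^ j) :
    Filter.Tendsto (fun κ : ℝ => (-κ) ^ (mt + 1) * Real.exp (κ * s) *
        ∫ x in (0:ℝ)..s, Real.exp (-κ * x) * P x)
      Filter.atBot (nhds ((Nat.factorial mt : ℝ) * c mt)) := by
  refine ((tendsto_pow_mul_integral_exp_neg_mul_sum_pow hs hmd c).comp
    tendsto_neg_atBot_atTop).congr fun κ => ?_
  simp only [Function.comp_apply, hP,
    integral_exp_mul_comp_sub_left κ s (fun u => ∑ j ∈ Finset.Icc mt d, c j * u ^ j)]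
  rw [mul_assoc, ← mul_assoc (exp (κ * s)), ← exp_add]
  simp only [neg_mul, neg_neg, add_neg_cancel, exp_zero, one_mul]

/-- Watson-type asymptotics at `κ → -∞`: if `P(x) = ∑_j c_j (s-x)^j` with lowest
nonzero coefficient `c_m̃ ≠ 0` and `s > 0`, then
`(-κ)^{m̃+1} e^{κs} ∫_0^s e^{-κx} P(x) dx → m̃! c_m̃` as `κ → -∞`. -/
theorem stmt_2 (s : ℝ) (hs : 0 < s) (mt d : ℕ) (hmd : mt ≤ d) (c : ℕ → ℝ) (hc : c mt ≠ 0)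
    (P : ℝ → ℝ) (hP : ∀ x, P x = ∑ j ∈ Finset.Icc mt d, c j * (s - x) ^ j) :
    Filter.Tendsto (fun κ : ℝ => (-κ) ^ (mt + 1) * Real.exp (κ * s) *
        ∫ x in (0:ℝ)..s, Real.exp (-κ * x) * P x)
      Filter.atBot (nhds ((Nat.factorial mt : ℝ) * c mt)) :=
  stmt_2_general s hs mt d hmd c P hP
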